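/- Let A be a ∗-ring with h⁻(A) = 0, and let μ₁, μ₂ ∈ A be self-dual elements forming an A-regular sequence. Suppose that no nonzero element of h⁺(A) annihilates both [μ₁] and [μ₂] (i.e. Ann_{h⁺(A)}([μ₁],[μ₂]) = 0). Then h⁻(Aμ₁ + Aμ₂) = 0, and the map (h⁺(A) ⊕ h⁺(A)) / h⁺(A)·([μ₂],[μ₁]) → h⁺(Aμ₁ + Aμ₂) sending the class of (x, y) to x·[μ₁] + y·[μ₂] is a well-defined isomorphism of h⁺(A)-modules (here [μ₁], [μ₂] on the right denote the classes of μ₁, μ₂ in h⁺ of the ∗-ideal Aμ₁ + Aμ₂). -/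
import Mathlib


/-- Lemma 1.2 (type C analogue): Let `A` be a commutative ∗-ring with `h⁻(A) = 0`
(every anti-self-dual element is of the form `b - b∗`), and let `μ₁, μ₂` be self-dual
elements forming an `A`-regular sequence, such that no nonzero element of `h⁺(A)`
annihilates both `[μ₁]` and `[μ₂]`.  Then, with `M = Aμ₁ + Aμ₂`:
(1) `h⁻(M) = 0`: every `x ∈ M` with `x∗ = -x` is of the form `y - y∗` with `y ∈ M`;
(2) the map `(h⁺(A) ⊕ h⁺(A)) / h⁺(A)·([μ₂],[μ₁]) → h⁺(M)`, `(x,y) ↦ x[μ₁] + y[μ₂]`, is a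
well-defined isomorphism of `h⁺(A)`-modules, expressed here by surjectivity (every
self-dual element of `M` is, modulo traces `m + m∗` of elements `m ∈ M`, of the form
`a·μ₁ + b·μ₂` with `a, b` self-dual) and injectivity (if `a·μ₁ + b·μ₂` is a trace of an
element of `M` for self-dual `a, b`, then `([a],[b]) = [c]·([μ₂],[μ₁])` in
`h⁺(A) ⊕ h⁺(A)` for some self-dual `c`). -/
theorem stmt_0 {A : Type*} [CommRing A] [StarRing A]
    (hA : ∀ a : A, star a = -a → ∃ b : A, a = b - star b)
    (μ₁ μ₂ : A) (h₁ : star μ₁ = μ₁) (h₂ : star μ₂ = μ₂)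
    (hreg₁ : ∀ x : A, μ₁ * x = 0 → x = 0)
    (hreg₂ : ∀ x : A, μ₂ * x ∈ Ideal.span {μ₁} → x ∈ Ideal.span {μ₁})
    (hann : ∀ x : A, star x = x → (∃ t : A, x * μ₁ = t + star t) →
      (∃ t : A, x * μ₂ = t + star t) → ∃ t : A, x = t + star t) :
    (∀ x ∈ Ideal.span {μ₁, μ₂}, star x = -x →
      ∃ y ∈ Ideal.span ({μ₁, μ₂} : Set A), x = y - star y) ∧
    (∀ x ∈ Ideal.span {μ₁, μ₂}, star x = x →
      ∃ a b : A, star a = a ∧ star b = b ∧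
        ∃ m ∈ Ideal.span ({μ₁, μ₂} : Set A), x = a * μ₁ + b * μ₂ + (m + star m)) ∧
    (∀ a b : A, star a = a → star b = b →
      (∃ m ∈ Ideal.span ({μ₁, μ₂} : Set A), a * μ₁ + b * μ₂ = m + star m) →
      ∃ c : A, star c = c ∧ (∃ t : A, a = c * μ₂ + (t + star t)) ∧
        (∃ s : A, b = c * μ₁ + (s + star s))) := by
  refine ⟨?_, ?_, ?_⟩
  · -- (1) h⁻(M) = 0
    intro x hx hsx
    obtain ⟨p, q, rfl⟩ := Ideal.mem_span_pair.mp hx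
    simp only [star_add, star_mul, h₁, h₂] at hsx
    have key : (p + star p) * μ₁ + (q + star q) * μ₂ = 0 := by linear_combination hsx
    obtain ⟨w, hw⟩ := Ideal.mem_span_singleton'.mp
      (hreg₂ (q + star q) (Ideal.mem_span_singleton'.mpr
        ⟨-(p + star p), by linear_combination -key⟩))
    have hu : p + star p + w * μ₂ = 0 :=
      hreg₁ _ (by linear_combination key + μ₂ * hw)
    have hw' := congrArg star hw
    simp only [star_add, star_mul, star_star, h₁] at hw'
    have hwsd : star w = w := by
      have := hreg₁ (star w - w) (by linear_combination hw' - hw)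
      linear_combination this
    obtain ⟨t, ht⟩ := hann w hwsd ⟨q, hw⟩
      ⟨-p, by rw [star_neg]; linear_combination hu⟩
    obtain ⟨a, ha⟩ := hA (p + t * μ₂) (by
      simp only [star_add, star_mul, h₂]
      linear_combination hu - μ₂ * ht)
    obtain ⟨b, hb⟩ := hA (q - t * μ₁) (by
      simp only [star_sub, star_mul, h₁]
      linear_combination μ₁ * ht - hw)
    refine ⟨a * μ₁ + b * μ₂, Ideal.mem_span_pair.mpr ⟨a, b, rfl⟩, ?_⟩
    simp only [star_add, star_mul, h₁, h₂]
    linear_combination μ₁ * ha + μ₂ * hb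
  · -- (2) surjectivity
    intro x hx hsx
    obtain ⟨p, q, rfl⟩ := Ideal.mem_span_pair.mp hx
    simp only [star_add, star_mul, h₁, h₂] at hsx
    have key : (p - star p) * μ₁ + (q - star q) * μ₂ = 0 := by linear_combination -hsx
    obtain ⟨w, hw⟩ := Ideal.mem_span_singleton'.mp
      (hreg₂ (q - star q) (Ideal.mem_span_singleton'.mpr
        ⟨-(p - star p), by linear_combination -key⟩))
    have hu : p - star p + w * μ₂ = 0 :=
      hreg₁ _ (by linear_combination key + μ₂ * hw)
    have hw' := congrArg star hw
    simp only [star_sub, star_mul, star_star, h₁] at hw'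
    have hws : star w = -w := by
      have := hreg₁ (star w + w) (by linear_combination hw' + hw)
      linear_combination this
    obtain ⟨s, hs⟩ := hA w hws
    refine ⟨p + s * μ₂, q - s * μ₁, ?_, ?_, 0, Ideal.zero_mem _, by rw [star_zero]; ring⟩
    · simp only [star_add, star_mul, h₂]
      linear_combination μ₂ * hs - hu
    · simp only [star_sub, star_mul, h₁]
      linear_combination hw - μ₁ * hs
  · -- (3) injectivity
    rintro a b hsa hsb ⟨m, hm, heq⟩
    obtain ⟨p, q, rfl⟩ := Ideal.mem_span_pair.mp hm
    simp only [star_add, star_mul, h₁, h₂] at heq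
    obtain ⟨c, hc⟩ := Ideal.mem_span_singleton'.mp
      (hreg₂ (q + star q - b) (Ideal.mem_span_singleton'.mpr
        ⟨a - (p + star p), by linear_combination heq⟩))
    have hz : a - c * μ₂ - (p + star p) = 0 :=
      hreg₁ _ (by linear_combination heq - μ₂ * hc)
    have hc' := congrArg star hc
    simp only [star_sub, star_add, star_mul, star_star, h₁, hsb] at hc'
    have hsc : star c = c := by
      have := hreg₁ (star c - c) (by linear_combination hc' - hc)
      linear_combination this
    refine ⟨-c, by rw [star_neg, hsc], ⟨c * μ₂ + p, ?_⟩, ⟨q, ?_⟩⟩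
    · simp only [star_add, star_mul, h₂, hsc]
      linear_combination hz
    · linear_combination hc
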